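/- arXiv:math/0109101 — 7 statements merged into one kernel-verified Lean document; each statement's English description precedes it below -/
import Mathlib

section
/- For every set R of infinite partitions of ℕ there exists a set A ⊇ R of infinite partitions which has the Baire property with respect to the dual Ellentuck topology, and such that whenever Z ⊆ A \ R has the Baire property with respect to the dual Ellentuck topology, then Z is meager with respect to the dual Ellentuck topology. -/
/-- The set of infinite partitions of ℕ, identified with equivalence relations
on ℕ with infinite quotient. -/
abbrev InfPart := {X : Setoid ℕ // Infinite (Quotient X)}

/-- The dual Ellentuck neighborhood `[s,X]_n`: all infinite partitions `Y` such that
`s` is an `n`-segment of `Y` and `Y` is coarser than `X`. -/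
def nbhd (n : ℕ) (s : ℕ → ℕ → Prop) (X : InfPart) : Set InfPart :=
  {Y | (∀ i < n, ∀ j < n, (s i j ↔ Y.1.r i j)) ∧ ∀ a b, X.1.r a b → Y.1.r a b}

/-- The condition for `[s,X]_n` to be a (nonempty-typed) dual Ellentuck neighborhood:
`∀ i j < n, X.r i j → s i j`. -/
def IsNbhd (n : ℕ) (s : ℕ → ℕ → Prop) (X : InfPart) : Prop :=
  ∀ i < n, ∀ j < n, (X.1.r i j → s i j)


/-- The dual Ellentuck topology, generated by the dual Ellentuck neighborhoods. -/
instance dualEllentuck : TopologicalSpace InfPart :=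
  TopologicalSpace.generateFrom
    {U | ∃ (n : ℕ) (s : ℕ → ℕ → Prop) (X : InfPart), IsNbhd n s X ∧ U = nbhd n s X}

open Set Topology Filter

section Banach

variable {α : Type*} [TopologicalSpace α]

lemma isNowhereDense_mono' {s t : Set α} (h : IsNowhereDense t) (hst : s ⊆ t) :
    IsNowhereDense s := by
  rw [IsNowhereDense, ← subset_empty_iff] at h ⊢
  exact (interior_mono (closure_mono hst)).trans h

lemma IsNowhereDense.isMeagre' {s : Set α} (h : IsNowhereDense s) : IsMeagre s :=
  isMeagre_iff_countable_union_isNowhereDense.2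
    ⟨{s}, by simpa using h, countable_singleton _, by simp⟩

lemma IsMeagre.union' {s t : Set α} (hs : IsMeagre s) (ht : IsMeagre t) : IsMeagre (s ∪ t) := by
  rw [IsMeagre, compl_union]; exact Filter.inter_mem hs ht

/-- A union of nowhere dense sets sitting inside pairwise disjoint open sets is
nowhere dense. -/
lemma isNowhereDense_iUnion_of_disjoint {ι : Type*} {U E : ι → Set α}
    (hUo : ∀ i, IsOpen (U i))
    (hd : Pairwise fun i j => Disjoint (U i) (U j))
    (hEU : ∀ i, E i ⊆ U i) (hE : ∀ i, IsNowhereDense (E i)) :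
    IsNowhereDense (⋃ i, E i) := by
  rw [IsNowhereDense, eq_empty_iff_forall_notMem]
  intro x hx
  set F := ⋃ i, E i with hF
  have hxc : x ∈ closure F := interior_subset hx
  obtain ⟨z, hz1, hz2⟩ := mem_closure_iff.1 hxc _ isOpen_interior hx
  obtain ⟨i₀, hzE⟩ := mem_iUnion.1 hz2
  have hsub : interior (closure F) ∩ U i₀ ⊆ closure (E i₀) := by
    intro y hy
    rw [mem_closure_iff]
    intro o ho hyo
    have h1 : y ∈ closure F := interior_subset hy.1
    obtain ⟨w, ⟨hwo, hwU⟩, hwF⟩ :=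
      mem_closure_iff.1 h1 _ (ho.inter (hUo i₀)) ⟨hyo, hy.2⟩
    obtain ⟨j, hwE⟩ := mem_iUnion.1 hwF
    rcases eq_or_ne j i₀ with rfl | hne
    · exact ⟨w, hwo, hwE⟩
    · exact absurd hwU (Set.disjoint_left.1 (hd hne) (hEU j hwE))
  have hsub2 : interior (closure F) ∩ U i₀ ⊆ interior (closure (E i₀)) :=
    interior_maximal hsub (isOpen_interior.inter (hUo i₀))
  rw [hE i₀] at hsub2
  exact hsub2 ⟨hz1, hEU i₀ hzE⟩

/-- Banach category theorem (localization): the part of `S` covered by open sets meeting `S`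
meagerly is meagre. -/
lemma banach_category (S : Set α) :
    IsMeagre ((⋃₀ {U : Set α | IsOpen U ∧ IsMeagre (U ∩ S)}) ∩ S) := by
  set O : Set (Set α) := {U | IsOpen U ∧ IsMeagre (U ∩ S)} with hO
  obtain ⟨T, hTmax⟩ := zorn_subset {T : Set (Set α) | T ⊆ O ∧ T.PairwiseDisjoint id}
    (by
      intro c hc hchain
      refine ⟨⋃₀ c, ⟨?_, ?_⟩, fun s hs => subset_sUnion_of_mem hs⟩
      · intro U hU
        obtain ⟨t, htc, hUt⟩ := hU
        exact (hc htc).1 hUt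
      · intro U hU V hV hUV
        obtain ⟨t, htc, hUt⟩ := hU
        obtain ⟨t', ht'c, hVt'⟩ := hV
        rcases hchain.total htc ht'c with h | h
        · exact (hc ht'c).2 (h hUt) hVt' hUV
        · exact (hc htc).2 hUt (h hVt') hUV)
  obtain ⟨⟨hTO, hTd⟩, hmax⟩ := hTmax
  set V := ⋃₀ T with hV
  have hVopen : IsOpen V := isOpen_sUnion fun U hU => (hTO hU).1
  -- every open set in O is inside the closure of V
  have hWsub : ⋃₀ O ⊆ closure V := by
    rintro x ⟨U, hUO, hxU⟩
    by_contra hx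
    set U' := U \ closure V with hU'
    have hU'O : U' ∈ O := ⟨hUO.1.sdiff isClosed_closure,
      hUO.2.mono (inter_subset_inter_left _ diff_subset)⟩
    have hdisj : ∀ W ∈ T, Disjoint U' W := fun W hW =>
      Set.disjoint_left.2 fun a haU' haW =>
        haU'.2 (subset_closure (mem_sUnion.2 ⟨W, hW, haW⟩))
    have hmem : insert U' T ∈ {T : Set (Set α) | T ⊆ O ∧ T.PairwiseDisjoint id} := by
      refine ⟨insert_subset hU'O hTO, hTd.insert fun W hW _ => hdisj W hW⟩
    have : U' ∈ T := hmax hmem (subset_insert _ _) (mem_insert _ _)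
    exact hx (subset_closure (mem_sUnion.2 ⟨U', this, hxU, hx⟩))
  -- frontier of V is meagre
  have hfront : IsMeagre (closure V \ V) := by
    have hcl : IsClosed (closure V \ V) := isClosed_closure.sdiff hVopen
    have hnd : IsNowhereDense (closure V \ V) := by
      rw [hcl.isNowhereDense_iff, eq_empty_iff_forall_notMem]
      intro x hx
      have hxc : x ∈ closure V := (interior_subset hx).1
      obtain ⟨z, hz1, hz2⟩ := mem_closure_iff.1 hxc _ isOpen_interior hx
      exact (interior_subset hz1).2 hz2
    exact hnd.isMeagre'
  -- V ∩ S is meagre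
  have hVS : IsMeagre (V ∩ S) := by
    have hcovers : ∀ U : T, ∃ g : ℕ → Set α,
        (∀ n, IsNowhereDense (g n)) ∧ (U : Set α) ∩ S ⊆ ⋃ n, g n := by
      rintro ⟨U, hUT⟩
      have hm := (hTO hUT).2
      rw [isMeagre_iff_countable_union_isNowhereDense] at hm
      obtain ⟨C, hC1, hC2, hC3⟩ := hm
      obtain ⟨g, hg⟩ := (hC2.insert ∅).exists_eq_range (insert_nonempty _ _)
      refine ⟨g, fun n => ?_, hC3.trans ?_⟩
      · have : g n ∈ insert ∅ C := hg ▸ mem_range_self n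
        rcases this with h | h
        · simp [h]
        · exact hC1 _ h
      · rintro y ⟨t, ht, hyt⟩
        have : t ∈ insert ∅ C := mem_insert_of_mem _ ht
        rw [hg] at this
        obtain ⟨n, rfl⟩ := this
        exact mem_iUnion.2 ⟨n, hyt⟩
    choose g hg1 hg2 using hcovers
    have hcov : V ∩ S ⊆ ⋃ n, ⋃ U : T, (g U n ∩ (U : Set α)) := by
      rintro x ⟨hxV, hxS⟩
      obtain ⟨U, hUT, hxU⟩ := hxV
      obtain ⟨n, hn⟩ := mem_iUnion.1 (hg2 ⟨U, hUT⟩ ⟨hxU, hxS⟩)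
      exact mem_iUnion.2 ⟨n, mem_iUnion.2 ⟨⟨U, hUT⟩, hn, hxU⟩⟩
    refine IsMeagre.mono hcov (isMeagre_iUnion fun n => ?_)
    refine IsNowhereDense.isMeagre' ?_
    exact isNowhereDense_iUnion_of_disjoint
      (fun U : T => (hTO U.2).1)
      (fun i j hij => hTd i.2 j.2 (fun h => hij (Subtype.ext h)))
      (fun U => inter_subset_right)
      (fun U => isNowhereDense_mono' (hg1 U n) inter_subset_left)
  refine IsMeagre.mono ?_ (hfront.union' hVS)
  rintro x ⟨hxW, hxS⟩
  by_cases hxV : x ∈ V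
  · exact Or.inr ⟨hxV, hxS⟩
  · exact Or.inl ⟨hWsub hxW, hxV⟩

end Banach

/-- For every set R of infinite partitions there is a Baire measurable A ⊇ R such that
every Baire measurable subset of A \ R is meager (dual Ellentuck topology). -/
theorem exists_baireMeasurable_hull (R : Set InfPart) :
    ∃ A : Set InfPart, R ⊆ A ∧ BaireMeasurableSet A ∧
      ∀ Z : Set InfPart, Z ⊆ A \ R → BaireMeasurableSet Z → IsMeagre Z := by
  set W : Set InfPart := ⋃₀ {U | IsOpen U ∧ IsMeagre (U ∩ R)} with hW
  have hWo : IsOpen W := isOpen_sUnion fun U hU => hU.1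
  have hWR : IsMeagre (W ∩ R) := banach_category R
  refine ⟨R ∪ Wᶜ, subset_union_left, ?_, ?_⟩
  · have hAB : R ∪ Wᶜ = Wᶜ ∪ (W ∩ R) := by
      ext x
      by_cases hx : x ∈ W <;> simp [hx]
    rw [hAB]
    exact hWo.baireMeasurableSet.compl.union hWR.baireMeasurableSet
  · intro Z hZsub hZBM
    obtain ⟨U, hUo, hZU⟩ := hZBM.residualEq_isOpen
    set M : Set InfPart := {x | ¬ (x ∈ Z ↔ x ∈ U)} with hMdef
    have hM : IsMeagre M := by
      rw [IsMeagre]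
      have h1 : {x : InfPart | (x ∈ Z) = (x ∈ U)} ∈ residual _ := hZU
      refine Filter.mem_of_superset h1 fun x hx => ?_
      simp only [hMdef, mem_compl_iff, mem_setOf_eq, not_not]
      exact iff_of_eq hx
    have hZsubUM : Z ⊆ U ∪ M := by
      intro x hx
      by_cases h : x ∈ U
      · exact Or.inl h
      · exact Or.inr fun hiff => h (hiff.1 hx)
    have hUsubZM : U ⊆ Z ∪ M := by
      intro x hx
      by_cases h : x ∈ Z
      · exact Or.inl h
      · exact Or.inr fun hiff => h (hiff.2 hx)
    have hZnR : ∀ x ∈ Z, x ∉ R := fun x hx => (hZsub hx).2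
    have hUR : IsMeagre (U ∩ R) := by
      refine hM.mono ?_
      rintro x ⟨hxU, hxR⟩
      rcases hUsubZM hxU with h | h
      · exact absurd hxR (hZnR x h)
      · exact h
    have hUW : U ⊆ W := subset_sUnion_of_mem ⟨hUo, hUR⟩
    have hZW : Z ⊆ Wᶜ := by
      intro x hx
      rcases (hZsub hx).1 with h | h
      · exact absurd h (hZnR x hx)
      · exact h
    have hUM : U ⊆ M := fun x hx =>
      (hUsubZM hx).elim (fun hz => absurd (hUW hx) (hZW hz)) id
    exact hM.mono fun x hx => (hZsubUM hx).elim (fun h => hUM h) id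
end

section
/- There exists a family C of subsets of ℕ such that C is Ramsey, but the set {X : X an infinite partition of ℕ with pac(X) ∈ C} is not dual-Ramsey. (Uses the axiom of choice: with AC one can construct a set which is Ramsey but not dual-Ramsey.) -/
/-- A partition Y is coarser than X. -/
def Coarser (Y X : Setoid ℕ) : Prop := ∀ n m, X.r n m → Y.r n m

/-- `(X)^ω`: the set of all infinite partitions coarser than X. -/
def cone (X : InfPart) : Set InfPart := {Y | Coarser Y.1 X.1}

/-- A set of infinite partitions is dual-Ramsey. -/
def DualRamsey (A : Set InfPart) : Prop :=
  ∃ X : InfPart, cone X ⊆ A ∨ cone X ∩ A = ∅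

/-- A family of subsets of ℕ is Ramsey. -/
def IsRamseyFamily (C : Set (Set ℕ)) : Prop :=
  ∃ x : Set ℕ, x.Infinite ∧
    ((∀ y ⊆ x, y.Infinite → y ∈ C) ∨ (∀ y ⊆ x, y.Infinite → y ∉ C))

/-- The pairing ♭(n,m) = (max(n,m)² − max(n,m))/2 + min(n,m). -/
def flat (n m : ℕ) : ℕ := (max n m ^ 2 - max n m) / 2 + min n m

/-- The partition code pac(X) = {♭(n,m) : n ≠ m ∧ ¬ X.r n m}. -/
def pac (X : Setoid ℕ) : Set ℕ := {k | ∃ n m, n ≠ m ∧ ¬ X.r n m ∧ k = flat n m}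

/-! ### Auxiliary lemmas -/

lemma two_mul_flat (n m : ℕ) : 2 * flat n m = max n m * (max n m - 1) + 2 * min n m := by
  unfold flat
  have h1 : max n m ^ 2 - max n m = max n m * (max n m - 1) := by
    rw [pow_two, Nat.mul_sub_one]
  rw [h1]
  obtain ⟨k, hk⟩ := Nat.even_mul_pred_self (max n m)
  omega

lemma tri_eq {M μ M' μ' : ℕ} (h1 : μ < M) (h2 : μ' < M')
    (h : M * (M - 1) + 2 * μ = M' * (M' - 1) + 2 * μ') : M = M' ∧ μ = μ' := by
  obtain ⟨a, rfl⟩ : ∃ a, M = a + 1 := ⟨M - 1, by omega⟩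
  obtain ⟨b, rfl⟩ : ∃ b, M' = b + 1 := ⟨M' - 1, by omega⟩
  simp only [Nat.add_sub_cancel] at h
  have hab : a = b := by nlinarith [h1, h2]
  subst hab
  omega

lemma flat_inj {n m c d : ℕ} (hnm : n ≠ m) (hcd : c ≠ d) (h : flat n m = flat c d) :
    (n = c ∧ m = d) ∨ (n = d ∧ m = c) := by
  have h2 : 2 * flat n m = 2 * flat c d := by rw [h]
  rw [two_mul_flat, two_mul_flat] at h2
  have e := tri_eq (min_lt_max.mpr hnm) (min_lt_max.mpr hcd) h2
  omega

lemma pac_injective {X Y : Setoid ℕ} (h : pac X = pac Y) : X = Y := by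
  apply Setoid.ext
  intro a b
  have key : ∀ S T : Setoid ℕ, pac S = pac T → ¬ S.r a b → ¬ T.r a b := by
    intro S T hST hS hT
    rcases eq_or_ne a b with rfl | hab
    · exact hS (S.iseqv.refl a)
    · have hm : flat a b ∈ pac S := ⟨a, b, hab, hS, rfl⟩
      rw [hST] at hm
      obtain ⟨c, d, hcd, hTr, heq⟩ := hm
      rcases flat_inj hab hcd heq with ⟨rfl, rfl⟩ | ⟨rfl, rfl⟩
      · exact hTr hT
      · exact hTr (T.iseqv.symm hT)
  constructor
  · intro hX
    by_contra hY
    exact key Y X h.symm hY hX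
  · intro hY
    by_contra hX
    exact key X Y h hX hY

/-- The homogeneous set: codes of pairs of distinct even numbers. -/
def evenPairs : Set ℕ := {k | ∃ n m, n ≠ m ∧ Even n ∧ Even m ∧ k = flat n m}

lemma evenPairs_infinite : evenPairs.Infinite := by
  apply Set.infinite_of_injective_forall_mem (f := fun k : ℕ => flat 0 (2*k+2))
  · intro i j hij
    rcases flat_inj (show (0:ℕ) ≠ 2*i+2 by omega) (show (0:ℕ) ≠ 2*j+2 by omega) hij with
      ⟨-, h⟩ | ⟨h, -⟩ <;> omega
  · intro k
    exact ⟨0, 2*k+2, by omega, Even.zero, ⟨k+1, by omega⟩, rfl⟩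

/-- No pac of an infinite partition is a subset of evenPairs. -/
lemma pac_not_subset (Y : Setoid ℕ) (hY : Infinite (Quotient Y)) (hsub : pac Y ⊆ evenPairs) :
    False := by
  have hall : ∀ n, Y.r n 1 := by
    intro n
    rcases eq_or_ne n 1 with rfl | hn
    · exact Y.iseqv.refl 1
    by_contra hr
    obtain ⟨c, d, hcd, hc, hd, heq⟩ := hsub ⟨n, 1, hn, hr, rfl⟩
    rcases flat_inj hn hcd heq with ⟨rfl, rfl⟩ | ⟨rfl, rfl⟩
    · exact (Nat.not_even_one) hd
    · exact (Nat.not_even_one) hc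
  haveI := hY
  let f := Infinite.natEmbedding (Quotient Y)
  have h01 : f 0 = f 1 := by
    rw [← (f 0).out_eq, ← (f 1).out_eq]
    exact Quotient.sound (Y.iseqv.trans (hall _) (Y.iseqv.symm (hall _)))
  exact absurd (f.injective h01) (by decide)

/-- merge all classes of `r (2*k)`, `k ≥ n`, into one -/
def mergeFrom (X : Setoid ℕ) (r : ℕ → ℕ) (n : ℕ) : Setoid ℕ where
  r a b := X.r a b ∨ ((∃ k, n ≤ k ∧ X.r a (r (2*k))) ∧ (∃ k, n ≤ k ∧ X.r b (r (2*k))))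
  iseqv := by
    constructor
    · intro a; exact Or.inl (X.iseqv.refl a)
    · rintro a b (h | ⟨ha, hb⟩)
      · exact Or.inl (X.iseqv.symm h)
      · exact Or.inr ⟨hb, ha⟩
    · rintro a b c (hab | ⟨ha, hb⟩) (hbc | ⟨hb', hc⟩)
      · exact Or.inl (X.iseqv.trans hab hbc)
      · exact Or.inr ⟨hb'.imp (fun k ⟨hk, hr⟩ => ⟨hk, X.iseqv.trans hab hr⟩), hc⟩
      · exact Or.inr ⟨ha, hb.imp (fun k ⟨hk, hr⟩ => ⟨hk, X.iseqv.trans (X.iseqv.symm hbc) hr⟩)⟩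
      · exact Or.inr ⟨ha, hc⟩

lemma exists_reps (X : Setoid ℕ) (hX : Infinite (Quotient X)) :
    ∃ r : ℕ → ℕ, ∀ i j, i ≠ j → ¬ X.r (r i) (r j) := by
  haveI := hX
  let f := Infinite.natEmbedding (Quotient X)
  refine ⟨fun i => (f i).out, fun i j hij h => hij (f.injective ?_)⟩
  rw [← (f i).out_eq, ← (f j).out_eq]
  exact Quotient.sound h

lemma mergeFrom_infinite (X : Setoid ℕ) (r : ℕ → ℕ)
    (hr : ∀ i j, i ≠ j → ¬ X.r (r i) (r j)) (n : ℕ) :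
    Infinite (Quotient (mergeFrom X r n)) := by
  apply Infinite.of_injective (fun k => Quotient.mk (mergeFrom X r n) (r (2*k+1)))
  intro i j h
  by_contra hij
  rcases Quotient.exact h with h1 | ⟨⟨k, hk, hrk⟩, -⟩
  · exact hr _ _ (by omega) h1
  · exact hr _ _ (by omega) hrk

lemma no_descending {α : Type*} {rel : α → α → Prop} (wf : WellFounded rel) (f : ℕ → α)
    (h : ∀ n, rel (f (n+1)) (f n)) : False := by
  obtain ⟨n, hn⟩ := wf.min_mem (Set.range f) ⟨f 0, ⟨0, rfl⟩⟩
  exact wf.not_lt_min (Set.range f) ⟨n+1, rfl⟩ (hn ▸ h n)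

noncomputable section

/-- A Bernstein-style set of infinite partitions: those that are not
`WellOrderingRel`-minimal in their own cone. -/
def BadSet : Set InfPart := {X | ∃ Y ∈ cone X, WellOrderingRel Y X}

lemma wf_wo : WellFounded (WellOrderingRel (α := InfPart)) :=
  (WellOrderingRel.isWellOrder).toIsWellFounded.wf

lemma self_mem_cone (X : InfPart) : X ∈ cone X := fun _ _ h => h

lemma cone_trans {Z Y X : InfPart} (hZ : Z ∈ cone Y) (hY : Y ∈ cone X) : Z ∈ cone X :=
  fun a b h => hZ a b (hY a b h)

/-- every cone contains an element not in BadSet -/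
lemma cone_nonbad (X : InfPart) : ∃ Z ∈ cone X, Z ∉ BadSet := by
  have hne : (cone X).Nonempty := ⟨X, self_mem_cone X⟩
  refine ⟨wf_wo.min (cone X) hne, wf_wo.min_mem _ hne, ?_⟩
  rintro ⟨Y, hY, hlt⟩
  exact wf_wo.not_lt_min (cone X) (cone_trans hY (wf_wo.min_mem _ hne)) hlt

/-- every cone contains an element of BadSet -/
lemma cone_bad (X : InfPart) : ∃ Z ∈ cone X, Z ∈ BadSet := by
  by_contra hcon
  push_neg at hcon
  obtain ⟨r, hr⟩ := exists_reps X.1 X.2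
  set f : ℕ → InfPart := fun n => ⟨mergeFrom X.1 r n, mergeFrom_infinite X.1 r hr n⟩ with hf
  have hcone : ∀ n, f n ∈ cone X := fun n a b h => Or.inl h
  have hstep : ∀ n, f n ∈ cone (f (n+1)) := by
    rintro n a b (h | ⟨⟨k, hk, hk2⟩, ⟨l, hl, hl2⟩⟩)
    · exact Or.inl h
    · exact Or.inr ⟨⟨k, by omega, hk2⟩, ⟨l, by omega, hl2⟩⟩
  have hneq : ∀ n, f n ≠ f (n+1) := by
    intro n heq
    have h1 : (f n).1.r (r (2*n)) (r (2*(n+1))) :=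
      Or.inr ⟨⟨n, by omega, X.1.iseqv.refl _⟩, ⟨n+1, by omega, X.1.iseqv.refl _⟩⟩
    have h1' : (f n).1 = (f (n+1)).1 := by rw [heq]
    rw [h1'] at h1
    rcases h1 with h | ⟨⟨k, hk, hk2⟩, -⟩
    · exact hr _ _ (by omega) h
    · exact hr _ _ (by omega) hk2
  have hdesc : ∀ n, WellOrderingRel (f (n+1)) (f n) := by
    intro n
    rcases trichotomous_of WellOrderingRel (f (n+1)) (f n) with h | h | h
    · exact h
    · exact absurd h.symm (hneq n)
    · exact absurd ⟨f n, hstep n, h⟩ (hcon (f (n+1)) (hcone (n+1)))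
  exact no_descending wf_wo f hdesc

end

/-- There is a Ramsey family C whose induced set of partitions is not dual-Ramsey. -/
theorem ramsey_not_dualRamsey :
    ∃ C : Set (Set ℕ), IsRamseyFamily C ∧
      ¬ DualRamsey {X : InfPart | pac X.1 ∈ C} := by
  classical
  refine ⟨(fun X : InfPart => pac X.1) '' BadSet, ?_, ?_⟩
  · refine ⟨evenPairs, evenPairs_infinite, Or.inr ?_⟩
    rintro y hsub _hinf ⟨Y, -, rfl⟩
    exact pac_not_subset Y.1 Y.2 hsub
  · have hAA : {X : InfPart | pac X.1 ∈ (fun X : InfPart => pac X.1) '' BadSet} = BadSet := by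
      ext X
      constructor
      · rintro ⟨Y, hY, hpac⟩
        have : Y = X := Subtype.ext (pac_injective hpac)
        exact this ▸ hY
      · intro hX
        exact ⟨X, hX, rfl⟩
    rw [hAA]
    rintro ⟨X, hX | hX⟩
    · obtain ⟨Z, hZ, hZb⟩ := cone_nonbad X
      exact hZb (hX hZ)
    · obtain ⟨Z, hZ, hZb⟩ := cone_bad X
      exact absurd hX (Set.nonempty_iff_ne_empty.mp ⟨Z, hZ, hZb⟩)
end

section
/- There exists a set A of infinite partitions of ℕ which is not dual-Ramsey; that is, for every infinite partition X of ℕ there exist infinite partitions Y and Z coarser than X with Y ∈ A and Z ∉ A. (Uses the axiom of choice.) -/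
/-!
A Bernstein-type diagonalisation. Pulling partitions back along a bijection `ℕ ≃ ℕ/X` embeds the
space of all infinite partitions into the cone `(X)^ω`, so every cone is as large as the whole
space. Enumerate the cones along the initial ordinal of that cardinality: at each stage fewer
points than that have been chosen, so two fresh points of the current cone can be chosen. The set
of all first choices then meets every cone and misses the second choice made in it.
-/

open Cardinal Function Set

universe u

section Bernstein

variable {α ι : Type u}

lemma exists_pair_mem_notMem_of_mk_lt {s t : Set α} (hst : #s < #t) (ht : ℵ₀ ≤ #t) :
    ∃ x ∈ t, ∃ y ∈ t, x ≠ y ∧ x ∉ s ∧ y ∉ s := by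
  obtain ⟨x, hxt, hxs⟩ := sdiff_nonempty_of_mk_lt_mk hst
  have hxst : #(insert x s : Set α) < #t :=
    mk_insert_le.trans_lt (add_lt_of_lt ht hst (one_lt_aleph0.trans_le ht))
  obtain ⟨y, hyt, hyxs⟩ := sdiff_nonempty_of_mk_lt_mk hxst
  exact ⟨x, hxt, y, hyt, fun h => hyxs (Or.inl h.symm), hxs, fun h => hyxs (Or.inr h)⟩

theorem exists_forall_inter_nonempty_and_sdiff_nonempty_of_wellFoundedLT [LinearOrder ι]
    [WellFoundedLT ι] (F : ι → Set α) (hF : ∀ i, #(Iio i) < #(F i)) (hinf : ∀ i, ℵ₀ ≤ #(F i)) :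
    ∃ A : Set α, ∀ i, (F i ∩ A).Nonempty ∧ (F i \ A).Nonempty := by
  have step : ∀ i (g : ∀ j < i, α × α), ∃ p : α × α, p.1 ∈ F i ∧ p.2 ∈ F i ∧ p.1 ≠ p.2 ∧
      ∀ j (hj : j < i), p.1 ≠ (g j hj).2 ∧ p.2 ≠ (g j hj).1 := by
    intro i g
    let B := range (fun j : Iio i => (g j j.2).1) ∪ range (fun j : Iio i => (g j j.2).2)
    have hB : #B < #(F i) := (mk_union_le _ _).trans_lt <|
      add_lt_of_lt (hinf i) (mk_range_le.trans_lt (hF i)) (mk_range_le.trans_lt (hF i))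
    obtain ⟨x, hx, y, hy, hxy, hxB, hyB⟩ := exists_pair_mem_notMem_of_mk_lt hB (hinf i)
    exact ⟨(x, y), hx, hy, hxy, fun j hj =>
      ⟨fun h => hxB (Or.inr ⟨⟨j, hj⟩, h.symm⟩), fun h => hyB (Or.inl ⟨⟨j, hj⟩, h.symm⟩)⟩⟩
  choose p hp using step
  let g : ι → α × α := wellFounded_lt.fix p
  have hg : ∀ i, (g i).1 ∈ F i ∧ (g i).2 ∈ F i ∧ (g i).1 ≠ (g i).2 ∧
      ∀ j < i, (g i).1 ≠ (g j).2 ∧ (g i).2 ≠ (g j).1 := fun i => by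
    rw [show g i = p i (fun j _ => g j) from wellFounded_lt.fix_eq p i]
    exact hp i _
  refine ⟨range fun i => (g i).1, fun i => ⟨⟨(g i).1, (hg i).1, i, rfl⟩, (g i).2, (hg i).2.1, ?_⟩⟩
  rintro ⟨j, hj⟩
  rcases lt_trichotomy j i with hji | rfl | hij
  · exact ((hg i).2.2.2 j hji).2 hj.symm
  · exact (hg j).2.2.1 hj
  · exact ((hg j).2.2.2 i hij).1 hj

theorem exists_forall_inter_nonempty_and_sdiff_nonempty (F : ι → Set α) (hι : #ι ≤ #α)
    (hα : ℵ₀ ≤ #α) (hF : ∀ i, #α ≤ #(F i)) :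
    ∃ A : Set α, ∀ i, (F i ∩ A).Nonempty ∧ (F i \ A).Nonempty := by
  obtain ⟨e⟩ : Nonempty (ι ≃ (#ι).ord.ToType) := Cardinal.eq.1 (mk_ord_toType _).symm
  have hIio (w : (#ι).ord.ToType) : #(Iio w) < #ι :=
    (mk_Iio_lt w (by simp)).trans_eq (mk_ord_toType _)
  obtain ⟨A, hA⟩ := exists_forall_inter_nonempty_and_sdiff_nonempty_of_wellFoundedLT (F ∘ e.symm)
    (fun w => (hIio w).trans_le (hι.trans (hF _))) (fun _ => hα.trans (hF _))
  exact ⟨A, fun i => by simpa using hA (e i)⟩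

end Bernstein

namespace InfPart

def comap (f : ℕ → ℕ) (hf : Surjective f) (P : InfPart) : InfPart :=
  ⟨P.1.comap f, by
    have := P.2
    refine Infinite.of_surjective (Quotient.map' f fun _ _ h => h) fun q => ?_
    induction q using Quotient.ind with
    | _ b => obtain ⟨a, rfl⟩ := hf b; exact ⟨⟦a⟧, rfl⟩⟩

lemma comap_injective {f : ℕ → ℕ} (hf : Surjective f) : Injective (comap f hf) := by
  intro P Q h
  refine Subtype.ext (Setoid.ext fun a b => ?_)
  obtain ⟨a, rfl⟩ := hf a
  obtain ⟨b, rfl⟩ := hf b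
  exact Setoid.ext_iff.1 (congrArg Subtype.val h) a b

def bot : InfPart :=
  ⟨⊥, Infinite.of_injective (Quotient.mk ⊥) fun _ _ h => Quotient.exact h⟩

instance : Infinite InfPart := by
  have hsurj (n : ℕ) : Surjective (· - n) := fun m => ⟨m + n, Nat.add_sub_cancel m n⟩
  have key (n k : ℕ) : (comap _ (hsurj n) bot).1 0 k ↔ k ≤ n := by
    change (⊥ : Setoid ℕ) (0 - n) (k - n) ↔ k ≤ n
    rw [Setoid.bot_def]
    omega
  refine Infinite.of_injective (fun n => comap _ (hsurj n) bot) fun n m h => ?_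
  have hnm (k : ℕ) : k ≤ n ↔ k ≤ m := by
    dsimp only at h
    rw [← key, ← key, h]
  exact le_antisymm ((hnm n).1 le_rfl) ((hnm m).2 le_rfl)

lemma mk_le_mk_cone (X : InfPart) : #InfPart ≤ #(cone X) := by
  have := X.2
  obtain ⟨e⟩ : Nonempty (Quotient X.1 ≃ ℕ) := nonempty_equiv_of_countable
  have hf : Surjective (e ∘ Quotient.mk X.1) := e.surjective.comp Quotient.mk_surjective
  refine mk_le_of_injective (f := fun P => (⟨comap _ hf P, fun a b h => ?_⟩ : cone X)) ?_
  · show P.1.r (e ⟦a⟧) (e ⟦b⟧)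
    rw [Quotient.sound h]
  · exact fun P Q h => comap_injective hf (congrArg Subtype.val h)

end InfPart

/-- There is a set of infinite partitions which is not dual-Ramsey. -/
theorem exists_not_dualRamsey :
    ∃ A : Set InfPart, ∀ X : InfPart,
      (∃ Y : InfPart, Coarser Y.1 X.1 ∧ Y ∈ A) ∧
      (∃ Z : InfPart, Coarser Z.1 X.1 ∧ Z ∉ A) := by
  obtain ⟨A, hA⟩ := exists_forall_inter_nonempty_and_sdiff_nonempty cone le_rfl
    (aleph0_le_mk InfPart) InfPart.mk_le_mk_cone
  exact ⟨A, hA⟩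
end

section
/- Let R be a set of infinite partitions of ℕ and let M_R be the union of all dual Ellentuck neighborhoods [t,Z]_m such that R ∩ [t,Z]_m is meager with respect to the dual Ellentuck topology. Then the set M_R ∩ R is meager with respect to the dual Ellentuck topology. -/
/-- The union of all dual Ellentuck neighborhoods in which R is meager. -/
def MR (R : Set InfPart) : Set InfPart :=
  {Y | ∃ (m : ℕ) (t : ℕ → ℕ → Prop) (Z : InfPart),
    IsNbhd m t Z ∧ IsMeagre (R ∩ nbhd m t Z) ∧ Y ∈ nbhd m t Z}


open Set

section BanachCategory

variable {α : Type*} [TopologicalSpace α]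

lemma IsMeagre.exists_subset_iUnion_isNowhereDense {s : Set α} (hs : IsMeagre s) :
    ∃ f : ℕ → Set α, (∀ n, IsNowhereDense (f n)) ∧ s ⊆ ⋃ n, f n := by
  obtain ⟨S, hSnd, hScount, hsS⟩ := isMeagre_iff_countable_union_isNowhereDense.1 hs
  obtain ⟨f, hf⟩ := (hScount.insert ∅).exists_eq_range (insert_nonempty _ _)
  refine ⟨f, fun n ↦ ?_, ?_⟩
  · rcases (hf ▸ mem_range_self n : f n ∈ insert ∅ S) with h | h
    · exact h ▸ isNowhereDense_empty
    · exact hSnd _ h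
  · rw [← sUnion_range, ← hf]
    exact hsS.trans (sUnion_mono (subset_insert _ _))

lemma IsOpen.isNowhereDense_frontier {s : Set α} (hs : IsOpen s) :
    IsNowhereDense (frontier s) := by
  rw [isClosed_frontier.isNowhereDense_iff, ← frontier_compl]
  exact interior_frontier hs.isClosed_compl

lemma isNowhereDense_biUnion_inter {𝒱 : Set (Set α)} (hopen : ∀ V ∈ 𝒱, IsOpen V)
    (hdisj : 𝒱.PairwiseDisjoint id) {f : Set α → Set α} (hf : ∀ V ∈ 𝒱, IsNowhereDense (f V)) :
    IsNowhereDense (⋃ V ∈ 𝒱, f V ∩ V) := by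
  set E := ⋃ V ∈ 𝒱, f V ∩ V
  rw [IsNowhereDense, eq_empty_iff_forall_notMem]
  intro x hx
  obtain ⟨y, hyW, hyE⟩ := mem_closure_iff.1 (interior_subset hx) _ isOpen_interior hx
  obtain ⟨V, hV, -, hyV⟩ := mem_iUnion₂.1 hyE
  -- Inside `V`, the set `E` is just `f V ∩ V`, by disjointness.
  have hEV : V ∩ E ⊆ f V := by
    rintro z ⟨hzV, hzE⟩
    obtain ⟨V', hV', hzf', hzV'⟩ := mem_iUnion₂.1 hzE
    obtain rfl : V' = V := hdisj.elim hV' hV (not_disjoint_iff.2 ⟨z, hzV', hzV⟩)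
    exact hzf'
  have hWV : interior (closure E) ∩ V ⊆ interior (closure (f V)) := by
    refine interior_maximal ?_ (isOpen_interior.inter (hopen V hV))
    calc interior (closure E) ∩ V ⊆ V ∩ closure E := fun z hz ↦ ⟨hz.2, interior_subset hz.1⟩
      _ ⊆ closure (V ∩ E) := (hopen V hV).inter_closure
      _ ⊆ closure (f V) := closure_mono hEV
  rw [hf V hV] at hWV
  exact hWV ⟨hyW, hyV⟩

lemma isMeagre_inter_sUnion_of_pairwiseDisjoint {A : Set α} {𝒱 : Set (Set α)}
    (hopen : ∀ V ∈ 𝒱, IsOpen V) (hdisj : 𝒱.PairwiseDisjoint id)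
    (hA : ∀ V ∈ 𝒱, IsMeagre (A ∩ V)) : IsMeagre (A ∩ ⋃₀ 𝒱) := by
  choose! f hfnd hfcov using fun V hV ↦ (hA V hV).exists_subset_iUnion_isNowhereDense
  refine (isMeagre_iUnion fun n ↦
    (isNowhereDense_biUnion_inter hopen hdisj fun V hV ↦ hfnd V hV n).isMeagre).mono ?_
  rintro x ⟨hxA, V, hV, hxV⟩
  obtain ⟨n, hn⟩ := mem_iUnion.1 (hfcov V hV ⟨hxA, hxV⟩)
  exact mem_iUnion.2 ⟨n, mem_biUnion hV ⟨hn, hxV⟩⟩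

lemma exists_pairwiseDisjoint_refinement_subset_closure {𝒰 : Set (Set α)}
    (hopen : ∀ U ∈ 𝒰, IsOpen U) :
    ∃ 𝒱 : Set (Set α), (∀ V ∈ 𝒱, IsOpen V ∧ ∃ U ∈ 𝒰, V ⊆ U) ∧ 𝒱.PairwiseDisjoint id ∧
      ⋃₀ 𝒰 ⊆ closure (⋃₀ 𝒱) := by
  obtain ⟨𝒱, h𝒱⟩ : ∃ 𝒱, Maximal
      (· ∈ {𝒱 : Set (Set α) | (∀ V ∈ 𝒱, IsOpen V ∧ ∃ U ∈ 𝒰, V ⊆ U) ∧ 𝒱.PairwiseDisjoint id}) 𝒱 :=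
    zorn_subset _ fun c hc hchain ↦ ⟨⋃₀ c,
      ⟨fun V ⟨𝒲, h𝒲, hV⟩ ↦ (hc h𝒲).1 V hV,
        (hchain.pairwiseDisjoint_sUnion id).2 fun 𝒲 h𝒲 ↦ (hc h𝒲).2⟩,
      fun _ ↦ subset_sUnion_of_mem⟩
  refine ⟨𝒱, h𝒱.1.1, h𝒱.1.2, ?_⟩
  rintro x ⟨U, hU, hxU⟩
  by_contra hx
  -- Otherwise `U \ closure (⋃₀ 𝒱)` could be added to `𝒱`.
  set V₀ := U \ closure (⋃₀ 𝒱)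
  have hV₀ : ∀ V ∈ 𝒱, Disjoint V₀ V := fun V hV ↦
    disjoint_left.2 fun _ hy hyV ↦ hy.2 (subset_closure ⟨V, hV, hyV⟩)
  have hmem : V₀ ∈ 𝒱 := h𝒱.mem_of_prop_insert
    ⟨forall_mem_insert.2 ⟨⟨(hopen U hU).sdiff isClosed_closure, U, hU, sdiff_subset⟩, h𝒱.1.1⟩,
      h𝒱.1.2.insert fun V hV _ ↦ hV₀ V hV⟩
  exact hx (subset_closure ⟨V₀, hmem, hxU, hx⟩)

theorem isMeagre_inter_sUnion {A : Set α} {𝒰 : Set (Set α)} (hopen : ∀ U ∈ 𝒰, IsOpen U)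
    (hA : ∀ U ∈ 𝒰, IsMeagre (A ∩ U)) : IsMeagre (A ∩ ⋃₀ 𝒰) := by
  obtain ⟨𝒱, h𝒱, hdisj, hdense⟩ := exists_pairwiseDisjoint_refinement_subset_closure hopen
  have hopen𝒱 : IsOpen (⋃₀ 𝒱) := isOpen_sUnion fun V hV ↦ (h𝒱 V hV).1
  have hmeagre𝒱 : IsMeagre (A ∩ ⋃₀ 𝒱) :=
    isMeagre_inter_sUnion_of_pairwiseDisjoint (fun V hV ↦ (h𝒱 V hV).1) hdisj fun V hV ↦
      let ⟨U, hU, hVU⟩ := (h𝒱 V hV).2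
      (hA U hU).mono (inter_subset_inter_right _ hVU)
  refine (hmeagre𝒱.union hopen𝒱.isNowhereDense_frontier.isMeagre).mono ?_
  rintro x ⟨hxA, hxU⟩
  by_cases hx : x ∈ ⋃₀ 𝒱
  · exact Or.inl ⟨hxA, hx⟩
  · exact Or.inr (hopen𝒱.frontier_eq ▸ ⟨hdense hxU, hx⟩)

end BanachCategory

lemma isOpen_nbhd {n : ℕ} {s : ℕ → ℕ → Prop} {X : InfPart} (h : IsNbhd n s X) :
    IsOpen (nbhd n s X) :=
  TopologicalSpace.isOpen_generateFrom_of_mem ⟨n, s, X, h, rfl⟩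

/-- The set M_R ∩ R is meager in the dual Ellentuck topology. -/
theorem isMeagre_MR_inter (R : Set InfPart) : IsMeagre (MR R ∩ R) := by
  have hsub : MR R ∩ R ⊆ R ∩ ⋃₀ {U | IsOpen U ∧ IsMeagre (R ∩ U)} := by
    rintro Y ⟨⟨m, t, Z, hnbhd, hmeagre, hY⟩, hR⟩
    exact ⟨hR, nbhd m t Z, ⟨isOpen_nbhd hnbhd, hmeagre⟩, hY⟩
  exact (isMeagre_inter_sUnion (fun _ hU ↦ hU.1) fun _ hU ↦ hU.2).mono hsub
end

section
/- For every sequence (X_i)_{i ∈ ℕ} of infinite partitions of ℕ such that X_{i+1} is coarser* than X_i for every i, there exists an infinite partition Y of ℕ such that Y is coarser* than X_i for every i. (This is the combinatorial content of the paper's Fact 2.3 that the forcing notion 𝔘 of infinite partitions ordered by coarser* is ℵ₀-closed.) -/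
/-- Y is coarser* than X: after merging the blocks of Y meeting some finite set f
into one block, the result is coarser than X. -/
def CoarserStar (Y X : Setoid ℕ) : Prop :=
  ∃ f : Set ℕ, f.Finite ∧ ∀ n m, X.r n m →
    Relation.EqvGen (fun a b => Y.r a b ∨ (a ∈ f ∧ b ∈ f)) n m

namespace CSAux

open Relation

attribute [local instance] Classical.propDecidable

variable (X : ℕ → InfPart) (f : ℕ → Set ℕ)

/-- The union of the first `i` witness sets. -/
def Fb (i : ℕ) : Set ℕ := ⋃ j ∈ Finset.range i, f j

/-- The "cleaned-up" partition at stage `i`: `X i` with all blocks meeting `Fb f i`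
merged into a single block. -/
def Rr (i : ℕ) : ℕ → ℕ → Prop :=
  EqvGen (fun a b => (X i).1.r a b ∨ (a ∈ Fb f i ∧ b ∈ Fb f i))

variable {X f}

lemma Rr_equiv (i : ℕ) : Equivalence (Rr X f i) := Relation.EqvGen.is_equivalence _

lemma Fb_mono {i j : ℕ} (hij : i ≤ j) : Fb f i ⊆ Fb f j := by
  intro a ha
  simp only [Fb, Set.mem_iUnion, Finset.mem_range, exists_prop] at *
  obtain ⟨k, hk, hka⟩ := ha
  exact ⟨k, lt_of_lt_of_le hk hij, hka⟩

lemma mem_Fb_succ {i : ℕ} {a : ℕ} (ha : a ∈ f i) : a ∈ Fb f (i + 1) := by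
  simp only [Fb, Set.mem_iUnion, Finset.mem_range, exists_prop]
  exact ⟨i, Nat.lt_succ_self i, ha⟩

lemma Fb_finite (hf : ∀ i, (f i).Finite) (i : ℕ) : (Fb f i).Finite :=
  Set.Finite.biUnion (Finset.range i).finite_toSet (fun j _ => hf j)

lemma Rr_succ (hcs : ∀ i, ∀ n m, (X i).1.r n m →
      EqvGen (fun a b => (X (i + 1)).1.r a b ∨ (a ∈ f i ∧ b ∈ f i)) n m)
    (i : ℕ) : ∀ n m, Rr X f i n m → Rr X f (i + 1) n m := by
  intro n m hnm
  induction hnm with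
  | rel a b hab =>
      rcases hab with hX | ⟨ha, hb⟩
      · refine Relation.EqvGen.mono ?_ _ _ (hcs i a b hX)
        intro x y hxy
        rcases hxy with hX' | ⟨hx, hy⟩
        · exact Or.inl hX'
        · exact Or.inr ⟨mem_Fb_succ hx, mem_Fb_succ hy⟩
      · exact EqvGen.rel _ _ (Or.inr ⟨Fb_mono (Nat.le_succ i) ha, Fb_mono (Nat.le_succ i) hb⟩)
  | refl a => exact EqvGen.refl a
  | symm a b _ ih => exact EqvGen.symm _ _ ih
  | trans a b c _ _ ih1 ih2 => exact EqvGen.trans _ _ _ ih1 ih2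

lemma Rr_mono (hcs : ∀ i, ∀ n m, (X i).1.r n m →
      EqvGen (fun a b => (X (i + 1)).1.r a b ∨ (a ∈ f i ∧ b ∈ f i)) n m)
    {i j : ℕ} (hij : i ≤ j) {n m : ℕ} (hnm : Rr X f i n m) : Rr X f j n m := by
  induction j, hij using Nat.le_induction with
  | base => exact hnm
  | succ j hj ih => exact Rr_succ hcs j n m ih

/-- Escape lemma for an infinite partition: one can avoid any finite set of blocks. -/
lemma escape (S : Setoid ℕ) (hS : Infinite (Quotient S)) (t : Set ℕ) (ht : t.Finite) :
    ∃ n, ∀ q ∈ t, ¬ S.r n q := by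
  haveI := hS
  have himg : ((fun q => (Quotient.mk S q)) '' t).Finite := ht.image _
  obtain ⟨c, hc⟩ := himg.infinite_compl.nonempty
  obtain ⟨n, rfl⟩ := Quotient.exists_rep c
  refine ⟨n, fun q hq hrel => hc ?_⟩
  exact ⟨q, hq, (Quotient.sound (S.symm hrel))⟩

/-- Characterization of `Rr`: it merges the blocks of `X i` meeting `Fb f i`. -/
lemma Rr_iff (i : ℕ) (n m : ℕ) :
    Rr X f i n m ↔ (X i).1.r n m ∨
      ((∃ a ∈ Fb f i, (X i).1.r n a) ∧ ∃ a ∈ Fb f i, (X i).1.r m a) := by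
  constructor
  · intro hnm
    induction hnm with
    | rel a b hab =>
        rcases hab with hX | ⟨ha, hb⟩
        · exact Or.inl hX
        · exact Or.inr ⟨⟨a, ha, (X i).1.refl a⟩, ⟨b, hb, (X i).1.refl b⟩⟩
    | refl a => exact Or.inl ((X i).1.refl a)
    | symm a b _ ih =>
        rcases ih with hX | ⟨h1, h2⟩
        · exact Or.inl ((X i).1.symm hX)
        · exact Or.inr ⟨h2, h1⟩
    | trans a b c _ _ ih1 ih2 =>
        rcases ih1 with hX1 | ⟨h1, h2⟩
        · rcases ih2 with hX2 | ⟨h3, h4⟩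
          · exact Or.inl ((X i).1.trans hX1 hX2)
          · refine Or.inr ⟨?_, h4⟩
            obtain ⟨q, hq, hbq⟩ := h3
            exact ⟨q, hq, (X i).1.trans hX1 hbq⟩
        · rcases ih2 with hX2 | ⟨h3, h4⟩
          · refine Or.inr ⟨h1, ?_⟩
            obtain ⟨q, hq, hbq⟩ := h2
            exact ⟨q, hq, (X i).1.trans ((X i).1.symm hX2) hbq⟩
          · exact Or.inr ⟨h1, h4⟩
  · intro hnm
    rcases hnm with hX | ⟨⟨a, ha, hna⟩, ⟨b, hb, hmb⟩⟩
    · exact EqvGen.rel _ _ (Or.inl hX)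
    · refine EqvGen.trans _ a _ (EqvGen.rel _ _ (Or.inl hna)) ?_
      refine EqvGen.trans _ b _ (EqvGen.rel _ _ (Or.inr ⟨ha, hb⟩)) ?_
      exact EqvGen.symm _ _ (EqvGen.rel _ _ (Or.inl hmb))

/-- Escape lemma for `Rr`. -/
lemma escape_R (hf : ∀ i, (f i).Finite) (i : ℕ) (t : Set ℕ) (ht : t.Finite) :
    ∃ n, ∀ q ∈ t, ¬ Rr X f i n q := by
  obtain ⟨n, hn⟩ := escape (X i).1 (X i).2 (t ∪ Fb f i) (ht.union (Fb_finite hf i))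
  refine ⟨n, fun q hq hrel => ?_⟩
  rcases (Rr_iff i n q).1 hrel with hX | ⟨⟨a, ha, hna⟩, _⟩
  · exact hn q (Or.inl hq) hX
  · exact hn a (Or.inr ha) hna

/-- Auxiliary: the first `k` diagonal representatives. -/
noncomputable def pvec (X : ℕ → InfPart) (f : ℕ → Set ℕ)
    (hstep : ∀ (k : ℕ) (g : ∀ j, j < k → ℕ), ∃ n, ∀ j, ∀ hj : j < k, ¬ Rr X f j n (g j hj)) :
    ℕ → ℕ → ℕ
  | 0, _ => 0
  | (k+1), j =>
      if j = k then Nat.find (hstep k (fun i _ => pvec X f hstep k i))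
      else pvec X f hstep k j

/-- The diagonal sequence of representatives: `pseq k` is the least number not
related to any earlier `pseq j` in the corresponding `Rr j`. -/
noncomputable def pseq (X : ℕ → InfPart) (f : ℕ → Set ℕ)
    (hstep : ∀ (k : ℕ) (g : ∀ j, j < k → ℕ), ∃ n, ∀ j, ∀ hj : j < k, ¬ Rr X f j n (g j hj))
    (k : ℕ) : ℕ :=
  pvec X f hstep (k + 1) k

variable
  (hstep : ∀ (k : ℕ) (g : ∀ j, j < k → ℕ), ∃ n, ∀ j, ∀ hj : j < k, ¬ Rr X f j n (g j hj))

lemma pvec_eq (k j : ℕ) (hj : j < k) : pvec X f hstep k j = pseq X f hstep j := by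
  induction k with
  | zero => omega
  | succ k ih =>
      rcases Nat.lt_succ_iff_lt_or_eq.1 hj with h | h
      · rw [pvec, if_neg (by omega), ih h]
      · subst h; rfl

lemma pseq_eq (k : ℕ) :
    pseq X f hstep k = Nat.find (hstep k (fun i _ => pvec X f hstep k i)) := by
  rw [pseq, pvec, if_pos rfl]

lemma pseq_spec (k : ℕ) : ∀ j, j < k → ¬ Rr X f j (pseq X f hstep k) (pseq X f hstep j) := by
  intro j hj
  rw [pseq_eq, ← pvec_eq (hstep := hstep) k j hj]
  exact Nat.find_spec (hstep k (fun i _ => pvec X f hstep k i)) j hj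

lemma pseq_min {k m : ℕ} (hm : ∀ j, j < k → ¬ Rr X f j m (pseq X f hstep j)) :
    pseq X f hstep k ≤ m := by
  rw [pseq_eq]
  exact Nat.find_min' (hstep k (fun i _ => pvec X f hstep k i))
    (fun j hj => (pvec_eq (hstep := hstep) k j hj).symm ▸ hm j hj)

lemma pseq_strictMono : StrictMono (pseq X f hstep) := by
  apply strictMono_nat_of_lt_succ
  intro k
  have h1 : pseq X f hstep (k + 1) ≠ pseq X f hstep k := by
    intro he
    exact pseq_spec hstep (k + 1) k (Nat.lt_succ_self k) (he ▸ (Rr_equiv k).refl _)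
  have h2 : pseq X f hstep k ≤ pseq X f hstep (k + 1) := by
    apply pseq_min hstep
    intro j hj
    exact pseq_spec hstep (k + 1) j (hj.trans (Nat.lt_succ_self k))
  exact lt_of_le_of_ne h2 (Ne.symm h1)

lemma pseq_cover (n : ℕ) : ∃ k, Rr X f k n (pseq X f hstep k) := by
  by_contra hc
  push_neg at hc
  have h1 : pseq X f hstep (n + 1) ≤ n := pseq_min hstep (fun j _ => hc j)
  have h2 : n + 1 ≤ pseq X f hstep (n + 1) := (pseq_strictMono hstep).le_apply
  omega

end CSAux

/-- Every ⊑*-decreasing sequence of infinite partitions has a lower bound: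
the partial order of infinite partitions under coarser* is σ-closed. -/
theorem coarserStar_sigma_closed (X : ℕ → InfPart)
    (h : ∀ i, CoarserStar (X (i + 1)).1 (X i).1) :
    ∃ Y : InfPart, ∀ i, CoarserStar Y.1 (X i).1 := by
  classical
  choose f hfin hcs using h
  have hstep : ∀ (k : ℕ) (g : ∀ j, j < k → ℕ),
      ∃ n, ∀ j, ∀ hj : j < k, ¬ CSAux.Rr X f j n (g j hj) := by
    intro k g
    have hts : {q | ∃ j, ∃ hj : j < k, q = g j hj} ⊆
        (fun j : Fin k => g j.1 j.2) '' Set.univ := by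
      rintro q ⟨j, hj, rfl⟩
      exact ⟨⟨j, hj⟩, Set.mem_univ _, rfl⟩
    obtain ⟨n, hn⟩ := CSAux.escape_R (X := X) (f := f) hfin k
      {q | ∃ j, ∃ hj : j < k, q = g j hj}
      (Set.Finite.subset (Set.finite_univ.image _) hts)
    refine ⟨n, fun j hj hrel => ?_⟩
    exact hn (g j hj) ⟨j, hj, rfl⟩ (CSAux.Rr_mono hcs (le_of_lt hj) hrel)
  set p := CSAux.pseq X f hstep with hp
  have hcover : ∀ n, ∃ k, CSAux.Rr X f k n (p k) := CSAux.pseq_cover hstep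
  set idx : ℕ → ℕ := fun n => Nat.find (hcover n) with hidx
  have idx_spec : ∀ n, CSAux.Rr X f (idx n) n (p (idx n)) := fun n => Nat.find_spec (hcover n)
  have idx_min : ∀ n k, CSAux.Rr X f k n (p k) → idx n ≤ k := fun n k hk =>
    Nat.find_min' (hcover n) hk
  have idx_p : ∀ k, idx (p k) = k := by
    intro k
    have h1 : idx (p k) ≤ k := idx_min (p k) k ((CSAux.Rr_equiv k).refl _)
    rcases lt_or_eq_of_le h1 with h2 | h2
    · exact absurd (idx_spec (p k)) (CSAux.pseq_spec hstep k (idx (p k)) h2)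
    · exact h2
  -- key monotone-comparison lemma
  have B1 : ∀ i n m, CSAux.Rr X f i n m → i ≤ idx n → idx m ≤ idx n := by
    intro i n m hnm hi
    have h1 : CSAux.Rr X f (idx n) n m := CSAux.Rr_mono hcs hi hnm
    have h2 : CSAux.Rr X f (idx n) m (p (idx n)) :=
      (CSAux.Rr_equiv _).trans ((CSAux.Rr_equiv _).symm h1) (idx_spec n)
    exact idx_min m (idx n) h2
  refine ⟨⟨Setoid.ker idx, ?_⟩, ?_⟩
  · refine Infinite.of_injective (fun k => Quotient.mk (Setoid.ker idx) (p k)) ?_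
    intro a b hab
    have : idx (p a) = idx (p b) := Quotient.exact hab
    rwa [idx_p, idx_p] at this
  · intro i
    -- construct the bound K
    set g : ℕ → ℕ := fun a =>
      if hg : ∃ b, i ≤ b ∧ ∃ x, idx x = b ∧ CSAux.Rr X f i x (p a) then hg.choose else 0 with hgdef
    set K : ℕ := i + (Finset.range i).sup g with hK
    have key : ∀ n m, CSAux.Rr X f i n m → idx n < i → idx m ≤ K := by
      intro n m hnm ha
      rcases lt_or_ge (idx m) i with hb | hb
      · omega
      · have hxm : CSAux.Rr X f i m (p (idx n)) := by
          have h1 : CSAux.Rr X f i n (p (idx n)) :=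
            CSAux.Rr_mono hcs (le_of_lt ha) (idx_spec n)
          exact (CSAux.Rr_equiv _).trans ((CSAux.Rr_equiv _).symm hnm) h1
        have hg : ∃ b, i ≤ b ∧ ∃ x, idx x = b ∧ CSAux.Rr X f i x (p (idx n)) :=
          ⟨idx m, hb, m, rfl, hxm⟩
        obtain ⟨hgb, x, hxb, hxrel⟩ := hg.choose_spec
        -- uniqueness: idx m = hg.choose
        have huniq : idx m = hg.choose := by
          have hxy : CSAux.Rr X f i m x :=
            (CSAux.Rr_equiv _).trans hxm ((CSAux.Rr_equiv _).symm hxrel)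
          have e1 : idx x ≤ idx m := B1 i m x hxy hb
          have e2 : idx m ≤ idx x :=
            B1 i x m ((CSAux.Rr_equiv _).symm hxy) (hxb ▸ hgb)
          omega
        have : g (idx n) = hg.choose := by rw [hgdef]; simp only [dif_pos hg]
        have hle : g (idx n) ≤ (Finset.range i).sup g :=
          Finset.le_sup (Finset.mem_range.2 ha)
        omega
    refine ⟨p '' Set.Iic K, (Set.finite_Iic K).image p, ?_⟩
    intro n m hnm
    have hR : CSAux.Rr X f i n m := Relation.EqvGen.rel _ _ (Or.inl hnm)
    by_cases he : idx n = idx m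
    · exact Relation.EqvGen.rel _ _ (Or.inl he)
    · have hbnd : idx n ≤ K ∧ idx m ≤ K := by
        rcases lt_or_ge (idx n) i with ha | ha
        · exact ⟨by omega, key n m hR ha⟩
        · rcases lt_or_ge (idx m) i with hb | hb
          · exact ⟨key m n ((CSAux.Rr_equiv _).symm hR) hb, by omega⟩
          · exact absurd (le_antisymm (B1 i n m hR ha) (B1 i m n ((CSAux.Rr_equiv _).symm hR) hb))
              (Ne.symm he)
      refine Relation.EqvGen.trans _ (p (idx n)) _
        (Relation.EqvGen.rel _ _ (Or.inl (idx_p (idx n)).symm)) ?_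
      refine Relation.EqvGen.trans _ (p (idx m)) _
        (Relation.EqvGen.rel _ _ (Or.inr ⟨⟨idx n, hbnd.1, rfl⟩, ⟨idx m, hbnd.2, rfl⟩⟩)) ?_
      exact Relation.EqvGen.rel _ _ (Or.inl (idx_p (idx m)))
end

section
/- For every infinite partition X of ℕ and every infinite set r ⊆ Min(X) with 0 ∈ r, there exists an infinite partition Y of ℕ coarser than X such that Min(Y) = r. (This is the block-merging construction used in the proof of the paper's Fact 2.3.) -/
/-- Min(X): the set of least elements of the blocks of X. -/
def MinSet (X : Setoid ℕ) : Set ℕ := {k | ∀ m, X.r k m → k ≤ m}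

theorem minSet_ker {f : ℕ → ℕ} (hle : ∀ n, f n ≤ n) (hidem : ∀ n, f (f n) = f n) :
    MinSet (Setoid.ker f) = Set.range f := by
  ext k
  constructor
  · intro hk
    exact ⟨k, le_antisymm (hle k) (hk (f k) (hidem k).symm)⟩
  · rintro ⟨n, rfl⟩ m hm
    calc f n = f m := (hidem n).symm.trans hm
      _ ≤ m := hle m

section BlockMin

variable (X : Setoid ℕ)

open Classical in
noncomputable def blockMin (n : ℕ) : ℕ := Nat.find ⟨n, X.refl n⟩

variable {X}

theorem rel_blockMin (n : ℕ) : X.r n (blockMin X n) := by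
  classical
  exact Nat.find_spec (p := X.r n) ⟨n, X.refl n⟩

theorem blockMin_le_of_rel {n k : ℕ} (h : X.r n k) : blockMin X n ≤ k := by
  classical
  exact Nat.find_min' (p := X.r n) ⟨n, X.refl n⟩ h

theorem blockMin_le (n : ℕ) : blockMin X n ≤ n :=
  blockMin_le_of_rel (X.refl n)

theorem blockMin_eq_of_rel {a b : ℕ} (h : X.r a b) : blockMin X a = blockMin X b :=
  le_antisymm (blockMin_le_of_rel (X.trans h (rel_blockMin b)))
    (blockMin_le_of_rel (X.trans (X.symm h) (rel_blockMin a)))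

theorem blockMin_eq_self {k : ℕ} (hk : k ∈ MinSet X) : blockMin X k = k :=
  le_antisymm (blockMin_le k) (hk _ (rel_blockMin k))

end BlockMin

/-- For every infinite partition X and infinite r ⊆ Min(X) with 0 ∈ r there is an
infinite partition Y coarser than X with Min(Y) = r. -/
theorem exists_coarser_minSet (X : InfPart) (r : Set ℕ) (hr : r.Infinite)
    (hsub : r ⊆ MinSet X.1) (h0 : 0 ∈ r) :
    ∃ Y : InfPart, Coarser Y.1 X.1 ∧ MinSet Y.1 = r := by
  classical
  set g : ℕ → ℕ := fun n => Nat.findGreatest (· ∈ r) (blockMin X.1 n)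
  have hmem : ∀ n, g n ∈ r := fun n => Nat.findGreatest_spec (Nat.zero_le _) h0
  have hfix : ∀ k ∈ r, g k = k := fun k hk => by
    simp only [g, blockMin_eq_self (hsub hk), Nat.findGreatest_eq hk]
  have hrange : Set.range g = r :=
    (Set.range_subset_iff.2 hmem).antisymm fun k hk => ⟨k, hfix k hk⟩
  have hcoarser : Coarser (Setoid.ker g) X.1 := fun a b h =>
    congrArg (Nat.findGreatest (· ∈ r)) (blockMin_eq_of_rel h)
  refine ⟨⟨Setoid.ker g, ?_⟩, hcoarser, ?_⟩
  · have : Infinite (Set.range g) := hrange ▸ hr.to_subtype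
    exact (Setoid.quotientKerEquivRange g).infinite_iff.2 this
  · rw [minSet_ker (fun n => (Nat.findGreatest_le _).trans (blockMin_le n))
      (fun n => hfix _ (hmem n)), hrange]
end

section
/- Let 𝒜 be a maximal almost disjoint family of infinite subsets of ℕ: the members of 𝒜 are infinite, any two distinct members have finite intersection, and every infinite subset of ℕ has infinite intersection with some member of 𝒜. Then for every infinite partition X of ℕ there exist an infinite partition P coarser than X and a member a ∈ 𝒜 such that Min(P) \ a is finite. (This is the density claim in the proof of the paper's Fact 2.4.) -/
/-!
By maximality, the infinite set `Min(X)` meets some `a ∈ 𝒜` in an infinite set. Keep the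
`X`-blocks whose least element lies in `a` and merge all other blocks into a single block. The
kept blocks are infinitely many, so the new partition is infinite, and its least elements are
those of the kept blocks, which lie in `a`, plus at most one more.
-/

def Setoid.collapseOutside {α : Type*} (X : Setoid α) (s : Set α)
    (hs : ∀ ⦃x y⦄, X.r x y → x ∈ s → y ∈ s) : Setoid α where
  r x y := X.r x y ∨ (x ∉ s ∧ y ∉ s)
  iseqv :=
    { refl := fun x => Or.inl (X.refl x)
      symm := by
        rintro x y (h | ⟨hx, hy⟩)
        exacts [Or.inl (X.symm h), Or.inr ⟨hy, hx⟩]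
      trans := by
        rintro x y z (hxy | ⟨hx, hy⟩) (hyz | ⟨hy', hz⟩)
        · exact Or.inl (X.trans hxy hyz)
        · exact Or.inr ⟨fun hxs => hy' (hs hxy hxs), hz⟩
        · exact Or.inr ⟨hx, fun hzs => hy (hs (X.symm hyz) hzs)⟩
        · exact Or.inr ⟨hx, hz⟩ }

namespace Setoid.collapseOutside

variable {α : Type*} {X : Setoid α} {s : Set α} {hs : ∀ ⦃x y⦄, X.r x y → x ∈ s → y ∈ s}

theorem _root_.Setoid.le_collapseOutside : X ≤ X.collapseOutside s hs := fun _ _ => Or.inl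

theorem rel_iff_of_mem {x y : α} (hx : x ∈ s) : (X.collapseOutside s hs).r x y ↔ X.r x y :=
  or_iff_left fun h => h.1 hx

theorem infinite_quotient {t : Set α} (hts : t ⊆ s) (ht : t.Infinite)
    (hX : ∀ x ∈ t, ∀ y ∈ t, X.r x y → x = y) :
    Infinite (Quotient (X.collapseOutside s hs)) := by
  refine Set.infinite_univ_iff.mp <|
    Set.infinite_of_injOn_mapsTo (f := Quotient.mk _) ?_ (Set.mapsTo_univ _ _) ht
  intro x hx y hy hxy
  exact hX x hx y hy <| (rel_iff_of_mem (hts hx)).mp (Quotient.exact hxy)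

end Setoid.collapseOutside

theorem eq_of_mem_minSet_of_rel {X : Setoid ℕ} {k l : ℕ} (hk : k ∈ MinSet X) (hl : l ∈ MinSet X)
    (h : X.r k l) : k = l :=
  le_antisymm (hk l h) (hl k (X.symm h))

theorem exists_mem_minSet_rel (X : Setoid ℕ) (n : ℕ) : ∃ k ∈ MinSet X, X.r n k := by
  classical
  have hn : ∃ k, X.r n k := ⟨n, X.refl n⟩
  refine ⟨Nat.find hn, fun m hm => Nat.find_min' hn ?_, Nat.find_spec hn⟩
  exact X.trans (Nat.find_spec hn) hm

theorem infinite_minSet (X : Setoid ℕ) [Infinite (Quotient X)] : (MinSet X).Infinite := by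
  refine Set.Infinite.of_image (Quotient.mk X) ?_
  convert Set.infinite_univ (α := Quotient X)
  refine Set.eq_univ_of_forall <| Quotient.ind fun n => ?_
  obtain ⟨k, hk, hnk⟩ := exists_mem_minSet_rel X n
  exact ⟨k, hk, Quotient.sound (X.symm hnk)⟩

section collapseOutside

variable {X : Setoid ℕ} {s : Set ℕ} {hs : ∀ ⦃x y⦄, X.r x y → x ∈ s → y ∈ s}

theorem minSet_collapseOutside_inter_subset : MinSet (X.collapseOutside s hs) ∩ s ⊆ MinSet X :=
  fun _ ⟨hx, _⟩ m hm => hx m (Or.inl hm)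

theorem minSet_collapseOutside_diff_subsingleton :
    (MinSet (X.collapseOutside s hs) \ s).Subsingleton :=
  fun _ ⟨hx, hxs⟩ _ ⟨hy, hys⟩ => eq_of_mem_minSet_of_rel hx hy (Or.inr ⟨hxs, hys⟩)

end collapseOutside

def blocksWithMinIn (X : Setoid ℕ) (a : Set ℕ) : Set ℕ :=
  {x | ∃ k ∈ a ∩ MinSet X, X.r x k}

theorem mem_blocksWithMinIn_of_rel {X : Setoid ℕ} {a : Set ℕ} ⦃x y : ℕ⦄ (h : X.r x y) :
    x ∈ blocksWithMinIn X a → y ∈ blocksWithMinIn X a :=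
  fun ⟨k, hk, hxk⟩ => ⟨k, hk, X.trans (X.symm h) hxk⟩

theorem minSet_inter_blocksWithMinIn_subset (X : Setoid ℕ) (a : Set ℕ) :
    MinSet X ∩ blocksWithMinIn X a ⊆ a :=
  fun _ ⟨hx, _, ⟨hka, hk⟩, hxk⟩ => eq_of_mem_minSet_of_rel hx hk hxk ▸ hka

theorem mad_dense_general (A : Set (Set ℕ))
    (hmax : ∀ x : Set ℕ, x.Infinite → ∃ a ∈ A, (x ∩ a).Infinite)
    (X : InfPart) :
    ∃ P : InfPart, Coarser P.1 X.1 ∧ ∃ a ∈ A, (MinSet P.1 \ a).Finite := by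
  have := X.2
  obtain ⟨a, haA, ha⟩ := hmax _ (infinite_minSet X.1)
  let P := X.1.collapseOutside (blocksWithMinIn X.1 a) mem_blocksWithMinIn_of_rel
  have hP : Infinite (Quotient P) :=
    Setoid.collapseOutside.infinite_quotient (t := MinSet X.1 ∩ a)
      (fun k ⟨hk, hka⟩ => ⟨k, ⟨hka, hk⟩, X.1.refl k⟩) ha
      fun _ hk _ hl => eq_of_mem_minSet_of_rel hk.1 hl.1
  have hXP : X.1 ≤ P := Setoid.le_collapseOutside
  refine ⟨⟨P, hP⟩, fun _ _ h => hXP h, a, haA, ?_⟩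
  have hsub : MinSet P \ a ⊆ MinSet P \ blocksWithMinIn X.1 a := fun x ⟨hx, hxa⟩ =>
    ⟨hx, fun hxs => hxa <| minSet_inter_blocksWithMinIn_subset X.1 a
      ⟨minSet_collapseOutside_inter_subset ⟨hx, hxs⟩, hxs⟩⟩
  exact minSet_collapseOutside_diff_subsingleton.finite.subset hsub

/-- For a maximal almost disjoint family 𝒜 and every infinite partition X there is an
infinite partition P coarser than X with Min(P) almost contained in some a ∈ 𝒜. -/
theorem mad_dense (A : Set (Set ℕ))
    (hinf : ∀ a ∈ A, a.Infinite)
    (had : ∀ a ∈ A, ∀ b ∈ A, a ≠ b → (a ∩ b).Finite)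
    (hmax : ∀ x : Set ℕ, x.Infinite → ∃ a ∈ A, (x ∩ a).Infinite)
    (X : InfPart) :
    ∃ P : InfPart, Coarser P.1 X.1 ∧ ∃ a ∈ A, (MinSet P.1 \ a).Finite :=
  mad_dense_general A hmax X
end
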